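/- Let n = 2p^k where p is an odd prime and k ≥ 1. Then I_r(ℤ/nℤ) = D((ℤ/nℤ)^×) + (k - 1). -/

import Mathlib

/-- The Davenport constant of a (multiplicative) commutative group: the least `k > 0` such
that every sequence of `k` elements has a nonempty subsequence with product `1`. -/
noncomputable def Davenport (G : Type*) [CommGroup G] : ℕ :=
  sInf {k : ℕ | 0 < k ∧ ∀ f : Fin k → G,
    ∃ T : Finset (Fin k), T.Nonempty ∧ ∏ i ∈ T, f i = 1}

/-- The Erdős–Burgess constant of a commutative monoid: the least `t > 0` such that every
sequence of `t` elements has a nonempty subsequence whose product is idempotent. -/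
noncomputable def ErdosBurgess (M : Type*) [CommMonoid M] : ℕ :=
  sInf {t : ℕ | 0 < t ∧ ∀ f : Fin t → M,
    ∃ T : Finset (Fin t), T.Nonempty ∧ (∏ i ∈ T, f i) * (∏ i ∈ T, f i) = ∏ i ∈ T, f i}

/-!
By the Chinese remainder theorem `ZMod (2 * p ^ k) ≃ ZMod 2 × ZMod (p ^ k)`, and the factor
`ZMod 2`, all of whose elements are idempotent and whose unit group is trivial, changes neither
constant. In `R = ZMod (p ^ k)` every nonunit is a multiple of `π = p`, and
`π ^ k = 0 ≠ π ^ (k - 1)`. Among `D(Rˣ) + k - 1` terms there are either `k` nonunits, whose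
product is `0`, or `D(Rˣ)` units, some nonempty subproduct of which is `1`. Conversely,
`D(Rˣ) - 1` units without a product-one subsequence together with `k - 1` copies of `π` have no
idempotent subproduct: such a subproduct `u π ^ m` with `0 < m < k` is nilpotent and nonzero, and
a nilpotent idempotent is `0`.
-/

open Finset

section Davenport

variable {G H : Type*} [CommGroup G] [CommGroup H]

/-- Two of the `k + 1` prefix products `f 0 ⋯ f (j - 1)` coincide, and the block between them
has product `1`. -/
theorem exists_nonempty_prod_eq_one_of_card_le [Fintype G] {k : ℕ}
    (hk : Fintype.card G ≤ k) (f : Fin k → G) :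
    ∃ T : Finset (Fin k), T.Nonempty ∧ ∏ i ∈ T, f i = 1 := by
  let S : Fin (k + 1) → Finset (Fin k) := fun j => univ.filter fun i => (i : ℕ) < j
  obtain ⟨a, b, hab, heq⟩ :=
    Fintype.exists_ne_map_eq_of_card_lt (fun j => ∏ i ∈ S j, f i) (by simpa using hk)
  wlog hlt : a < b generalizing a b
  · exact this b a hab.symm heq.symm (lt_of_le_of_ne (not_lt.1 hlt) hab.symm)
  have hsub : S a ⊆ S b := fun i => by simp only [S, mem_filter, mem_univ, true_and]; omega
  refine ⟨S b \ S a, ⟨⟨a, by omega⟩, by simp [S, hlt]⟩, ?_⟩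
  rw [← mul_eq_right (b := ∏ i ∈ S a, f i), prod_sdiff hsub, heq]

private theorem davenport_mem [Finite G] :
    Davenport G ∈ {k : ℕ | 0 < k ∧ ∀ f : Fin k → G,
      ∃ T : Finset (Fin k), T.Nonempty ∧ ∏ i ∈ T, f i = 1} := by
  have := Fintype.ofFinite G
  exact Nat.sInf_mem ⟨_, Fintype.card_pos, exists_nonempty_prod_eq_one_of_card_le le_rfl⟩

theorem davenport_pos [Finite G] : 0 < Davenport G :=
  davenport_mem.1

theorem exists_nonempty_prod_eq_one_of_davenport_le [Finite G] {ι : Type*} [Fintype ι]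
    (hι : Davenport G ≤ Fintype.card ι) (f : ι → G) :
    ∃ T : Finset ι, T.Nonempty ∧ ∏ i ∈ T, f i = 1 := by
  let e : Fin (Davenport G) ↪ ι :=
    (Fin.castLEEmb hι).trans (Fintype.equivFin ι).symm.toEmbedding
  obtain ⟨T, hT, hprod⟩ := davenport_mem.2 (f ∘ e)
  exact ⟨T.map e, hT.map, by rwa [prod_map]⟩

theorem exists_forall_prod_ne_one_of_lt_davenport {k : ℕ} (hk : k < Davenport G) :
    ∃ f : Fin k → G, ∀ T : Finset (Fin k), T.Nonempty → ∏ i ∈ T, f i ≠ 1 := by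
  rcases Nat.eq_zero_or_pos k with rfl | hpos
  · exact ⟨1, fun T hT => absurd hT (by simp [eq_empty_of_isEmpty T])⟩
  · have := Nat.notMem_of_lt_sInf hk
    simp only [Set.mem_ofPred_eq, hpos, true_and, not_forall, not_exists, not_and] at this
    exact this

theorem davenport_congr (e : G ≃* H) : Davenport G = Davenport H := by
  unfold Davenport
  congr 1
  ext k
  refine and_congr_right fun _ => ?_
  have key : ∀ f : Fin k → G,
      (∃ T : Finset (Fin k), T.Nonempty ∧ ∏ i ∈ T, e (f i) = 1) ↔
      ∃ T : Finset (Fin k), T.Nonempty ∧ ∏ i ∈ T, f i = 1 := fun f => by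
    simp only [← map_prod, MulEquivClass.map_eq_one_iff]
  constructor
  · intro h g
    simpa using (key (e.symm ∘ g)).2 (h _)
  · intro h f
    exact (key f).1 (h (e ∘ f))

end Davenport

section ErdosBurgess

variable {M N : Type*} [CommMonoid M] [CommMonoid N]

theorem erdosBurgess_eq_card_add_one {ι : Type*} [Fintype ι] (f : ι → M)
    (hf : ∀ T : Finset ι, T.Nonempty → ¬IsIdempotentElem (∏ i ∈ T, f i))
    (hgood : ∀ g : Fin (Fintype.card ι + 1) → M,
      ∃ T : Finset (Fin (Fintype.card ι + 1)),
        T.Nonempty ∧ IsIdempotentElem (∏ i ∈ T, g i)) :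
    ErdosBurgess M = Fintype.card ι + 1 := by
  refine (Nat.sInf_upward_closed_eq_succ_iff ?_ _).2
    ⟨⟨Nat.succ_pos _, hgood⟩, fun ⟨_, h⟩ => ?_⟩
  · rintro t t' hle ⟨ht, h⟩
    refine ⟨ht.trans_le hle, fun g => ?_⟩
    obtain ⟨T, hT, hprod⟩ := h (g ∘ Fin.castLE hle)
    exact ⟨T.map (Fin.castLEEmb hle), hT.map, by rwa [prod_map]⟩
  · let e := Fintype.equivFin ι
    obtain ⟨T, hT, hprod⟩ := h (f ∘ e.symm)
    exact hf (T.map e.symm.toEmbedding) hT.map (by rwa [prod_map])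

theorem erdosBurgess_eq_of_surjective (φ : M →* N) (hφ : Function.Surjective φ)
    (hidem : ∀ x, IsIdempotentElem (φ x) → IsIdempotentElem x) :
    ErdosBurgess M = ErdosBurgess N := by
  unfold ErdosBurgess
  congr 1
  ext t
  refine and_congr_right fun _ => ⟨fun h g => ?_, fun h f => ?_⟩
  · obtain ⟨T, hT, hprod⟩ := h (Function.surjInv hφ ∘ g)
    have := (show IsIdempotentElem _ from hprod).map φ
    simp only [map_prod, Function.comp_apply, Function.surjInv_eq hφ] at this
    exact ⟨T, hT, this⟩
  · obtain ⟨T, hT, hprod⟩ := h (φ ∘ f)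
    refine ⟨T, hT, hidem _ ?_⟩
    rw [map_prod]
    exact hprod

theorem erdosBurgess_congr (e : M ≃* N) : ErdosBurgess M = ErdosBurgess N :=
  erdosBurgess_eq_of_surjective e.toMonoidHom e.surjective fun x hx => by
    simpa using hx.map e.symm.toMonoidHom

theorem erdosBurgess_prod_of_forall_isIdempotentElem (hM : ∀ a : M, IsIdempotentElem a) :
    ErdosBurgess (M × N) = ErdosBurgess N :=
  erdosBurgess_eq_of_surjective (MonoidHom.snd M N) Prod.snd_surjective fun x hx =>
    Prod.ext (hM x.1) hx

end ErdosBurgess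

section PrincipalNilpotent

variable {R : Type*} [CommMonoidWithZero R] [Finite Rˣ] {π : R} {k : ℕ}

theorem exists_nonempty_isIdempotentElem_prod (hdiv : ∀ x : R, ¬IsUnit x → π ∣ x)
    (hπ : π ^ k = 0) (hk : 0 < k) {ι : Type*} [Fintype ι]
    (hι : Davenport Rˣ + (k - 1) ≤ Fintype.card ι) (f : ι → R) :
    ∃ T : Finset ι, T.Nonempty ∧ IsIdempotentElem (∏ i ∈ T, f i) := by
  classical
  by_cases hnonunits : k ≤ #(univ.filter fun i => ¬IsUnit (f i))
  · obtain ⟨T, hTsub, hTcard⟩ := exists_subset_card_eq hnonunits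
    refine ⟨T, card_pos.1 (hTcard ▸ hk), ?_⟩
    have hdvd : π ^ k ∣ ∏ i ∈ T, f i := by
      rw [← hTcard, ← prod_const]
      exact prod_dvd_prod_of_dvd _ _ fun i hi => hdiv _ (mem_filter.1 (hTsub hi)).2
    rw [hπ, zero_dvd_iff] at hdvd
    exact hdvd ▸ IsIdempotentElem.zero
  · have hcard := card_filter_add_card_filter_not (s := (univ : Finset ι)) fun i => IsUnit (f i)
    let u : {i // IsUnit (f i)} → Rˣ := fun i => i.2.unit
    obtain ⟨T, hT, hprod⟩ := exists_nonempty_prod_eq_one_of_davenport_le (f := u)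
      (by rw [card_univ] at hcard; rw [Fintype.card_subtype]; omega)
    refine ⟨T.map (Function.Embedding.subtype _), hT.map, ?_⟩
    have : ∏ i ∈ T.map (Function.Embedding.subtype _), f i = 1 := by
      rw [prod_map]
      simpa [u, Units.coe_prod] using congrArg Units.val hprod
    rw [this]
    exact IsIdempotentElem.one

theorem exists_forall_not_isIdempotentElem_prod (hπ : π ^ k = 0) (hπ' : π ^ (k - 1) ≠ 0) :
    ∃ f : Fin (Davenport Rˣ - 1) ⊕ Fin (k - 1) → R,
      ∀ T : Finset _, T.Nonempty → ¬IsIdempotentElem (∏ i ∈ T, f i) := by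
  obtain ⟨u, hu⟩ :=
    exists_forall_prod_ne_one_of_lt_davenport (Nat.sub_one_lt (davenport_pos (G := Rˣ)).ne')
  refine ⟨Sum.elim (fun i => (u i : R)) fun _ => π, fun T hT hidem => ?_⟩
  rw [prod_sum_eq_prod_toLeft_mul_prod_toRight] at hidem
  simp only [Sum.elim_inl, Sum.elim_inr, prod_const, ← Units.coe_prod] at hidem
  set U := ∏ i ∈ T.toLeft, u i
  set m := #T.toRight
  rcases Nat.eq_zero_or_pos m with hm | hm
  · have hleft : T.toLeft.Nonempty := by
      rw [← card_pos, ← card_toLeft_add_card_toRight] at hT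
      exact card_pos.1 (by omega)
    rw [hm, pow_zero, mul_one, IsIdempotentElem.iff_eq_one_of_isUnit U.isUnit] at hidem
    exact hu _ hleft (Units.val_eq_one.1 hidem)
  · have hnil : IsNilpotent ((U : R) * π ^ m) :=
      (U.isUnit.isNilpotent_unit_mul_of_commute_iff (Commute.all _ _)).2
        (IsNilpotent.pow_of_pos ⟨k, hπ⟩ hm.ne')
    have hm' : m ≤ k - 1 := (card_le_univ _).trans_eq (Fintype.card_fin _)
    have hπm : π ^ m = 0 := (Units.mul_right_eq_zero U).1 (hidem.eq_zero_of_isNilpotent hnil)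
    exact hπ' (pow_eq_zero_of_le hm' hπm)

theorem erdosBurgess_eq_davenport_add (hdiv : ∀ x : R, ¬IsUnit x → π ∣ x) (hπ : π ^ k = 0)
    (hπ' : π ^ (k - 1) ≠ 0) : ErdosBurgess R = Davenport Rˣ + (k - 1) := by
  have hk : 0 < k := Nat.pos_of_ne_zero fun h => hπ' (by simpa [h] using hπ)
  have hD := davenport_pos (G := Rˣ)
  obtain ⟨f, hf⟩ := exists_forall_not_isIdempotentElem_prod hπ hπ'
  have hcard :
      Fintype.card (Fin (Davenport Rˣ - 1) ⊕ Fin (k - 1)) + 1 = Davenport Rˣ + (k - 1) := by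
    simp only [Fintype.card_sum, Fintype.card_fin]
    omega
  rw [← hcard]
  exact erdosBurgess_eq_card_add_one f hf
    (exists_nonempty_isIdempotentElem_prod hdiv hπ hk (by simp only [Fintype.card_fin]; omega))

end PrincipalNilpotent

theorem erdosBurgess_zmod_prime_pow {p k : ℕ} (hp : p.Prime) (hk : 0 < k) :
    ErdosBurgess (ZMod (p ^ k)) = Davenport (ZMod (p ^ k))ˣ + (k - 1) := by
  have : NeZero (p ^ k) := ⟨pow_ne_zero _ hp.ne_zero⟩
  refine erdosBurgess_eq_davenport_add (π := (p : ZMod (p ^ k))) (fun x hx => ?_) ?_ ?_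
  · rw [← ZMod.natCast_zmod_val x, ZMod.isUnit_natCast_iff_not_dvd_pow hp hk, not_not] at hx
    obtain ⟨c, hc⟩ := hx
    exact ⟨c, by rw [← ZMod.natCast_zmod_val x, hc, Nat.cast_mul]⟩
  · rw [← Nat.cast_pow, ZMod.natCast_self]
  · rw [← Nat.cast_pow, Ne, ZMod.natCast_eq_zero_iff, Nat.pow_dvd_pow_iff_le_right hp.one_lt]
    omega

theorem stmt11 (p k : ℕ) (hp : p.Prime) (hodd : Odd p) (hk : 0 < k) :
    ErdosBurgess (ZMod (2 * p ^ k)) = Davenport ((ZMod (2 * p ^ k))ˣ) + (k - 1) := by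
  let crt := (ZMod.chineseRemainder ((Nat.coprime_two_left.2 hodd).pow_right k)).toMulEquiv
  calc ErdosBurgess (ZMod (2 * p ^ k))
      = ErdosBurgess (ZMod 2 × ZMod (p ^ k)) := erdosBurgess_congr crt
    _ = ErdosBurgess (ZMod (p ^ k)) :=
      erdosBurgess_prod_of_forall_isIdempotentElem (by unfold IsIdempotentElem; decide)
    _ = Davenport (ZMod (p ^ k))ˣ + (k - 1) := erdosBurgess_zmod_prime_pow hp hk
    _ = Davenport (ZMod (2 * p ^ k))ˣ + (k - 1) := by
      rw [davenport_congr
        ((Units.mapEquiv crt).trans (MulEquiv.prodUnits.trans MulEquiv.uniqueProd))]
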